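/- Fix integers $n \ge 3$ and $m = n - 1$. Let $G$ be a symmetric positive definite $m \times m$ real matrix, let $k \in \mathbb{R}^m$ and set $v = G k$, let $\kappa, \tau$ be nonzero real numbers, let $N$ be a real number, and let $s_1, \dots, s_m$ be real numbers. For each $a \in \{1,\dots,m\}$ define the $n \times n$ matrix $B^{(a)} = -s_a I_n + E^{(a)}$, where $E^{(a)}$ has: row $a$ equal to $-2(N/\tau)\,v^T$ in the first $m$ columns and $\kappa N/\tau$ in column $n$; row $n$ equal to $-N$ times the $a$-th row of $G$ in the first $m$ columns and $0$ in column $n$; and all other rows zero. Define the $n \times n$ matrix $H$ in block form by: top-left $m \times m$ block $(4\, v v^T - \kappa\tau\, G)/\kappa^2$, top-right $m \times 1$ block $-(2/\kappa)\, v$, bottom-left $1 \times m$ block $-(2/\kappa)\, v^T$, and bottom-right entry $1$. Then for every $a \in \{1,\dots,m\}$ the product matrix $H\,B^{(a)}$ is symmetric. -/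

import Mathlib

/-!
Write `e_a`, `e_n` for the basis vectors at `Sum.inl a`, `Sum.inr ()`. The non-scalar part of
`B^(a)` factors as `S^(a) H` with the symmetric matrix
`S^(a) = (κN/τ) (e_a e_nᵀ + e_n e_aᵀ + (2 v_a / κ) e_n e_nᵀ)`: the last row of `H` is
`-(2/κ) (v, -κ/2)`, and its `a`-th row minus `-(2 v_a/κ)` times the last row is
`-(τ/κ) (G_a, 0)`. Hence `H B^(a) = -s_a H + H S^(a) H` is symmetric.
-/

open Matrix

theorem Matrix.IsSymm.mul_smul_one_add_mul {K n : Type*} [CommRing K] [Fintype n]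
    [DecidableEq n] {H S : Matrix n n K} (hH : H.IsSymm) (hS : S.IsSymm) (c : K) :
    (H * (c • 1 + S * H)).IsSymm := by
  rw [mul_add, Matrix.mul_smul, mul_one, ← mul_assoc]
  refine (hH.smul c).add ?_
  rw [IsSymm, transpose_mul, transpose_mul, hH.eq, hS.eq, mul_assoc]

namespace MomentumConstraint

variable {K ι : Type*} [Field K]

def symmetrizer (G : Matrix ι ι K) (v : ι → K) (κ τ : K) :
    Matrix (ι ⊕ Unit) (ι ⊕ Unit) K :=
  fromBlocks
    (of fun i j => (4 * v i * v j - κ * τ * G i j) / κ ^ 2)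
    (of fun i _ => -(2 / κ) * v i)
    (of fun _ j => -(2 / κ) * v j)
    (of fun _ _ => 1)

def principalPart [DecidableEq ι] (G : Matrix ι ι K) (v : ι → K) (κ τ N : K) (a : ι) :
    Matrix (ι ⊕ Unit) (ι ⊕ Unit) K :=
  of fun i j =>
    match i, j with
    | Sum.inl i, Sum.inl j => if i = a then -2 * (N / τ) * v j else 0
    | Sum.inl i, Sum.inr _ => if i = a then κ * N / τ else 0
    | Sum.inr _, Sum.inl j => -N * G a j
    | Sum.inr _, Sum.inr _ => 0

def principalPartFactor [DecidableEq ι] (v : ι → K) (κ τ N : K) (a : ι) :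
    Matrix (ι ⊕ Unit) (ι ⊕ Unit) K :=
  (κ * N / τ) • fromBlocks 0 (of fun i _ => Pi.single a 1 i) (of fun _ j => Pi.single a 1 j)
    (of fun _ _ => 2 * v a / κ)

theorem symmetrizer_isSymm {G : Matrix ι ι K} (hG : G.IsSymm) (v : ι → K) (κ τ : K) :
    (symmetrizer G v κ τ).IsSymm := by
  refine IsSymm.fromBlocks (IsSymm.ext fun i j => ?_) rfl (IsSymm.ext fun _ _ => rfl)
  simp only [of_apply, hG.apply i j]
  ring

theorem principalPartFactor_isSymm [DecidableEq ι] (v : ι → K) (κ τ N : K) (a : ι) :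
    (principalPartFactor v κ τ N a).IsSymm :=
  (IsSymm.fromBlocks isSymm_zero rfl (IsSymm.ext fun _ _ => rfl)).smul _

theorem principalPartFactor_mul_symmetrizer [Fintype ι] [DecidableEq ι] {κ τ : K}
    (hκ : κ ≠ 0) (hτ : τ ≠ 0) (G : Matrix ι ι K) (v : ι → K) (N : K) (a : ι) :
    principalPartFactor v κ τ N a * symmetrizer G v κ τ = principalPart G v κ τ N a := by
  rw [principalPartFactor, symmetrizer, smul_mul, fromBlocks_multiply]
  ext (i | _) (j | _)
  · by_cases hi : i = a
    · simp only [principalPart, hi, if_true, Matrix.smul_apply, fromBlocks_apply₁₁, mul_apply,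
        Matrix.zero_mul, zero_add, Fintype.sum_unique, of_apply, Pi.single_eq_same,
        one_mul, smul_eq_mul]
      field_simp
    · simp [hi, principalPart, mul_apply]
  · simp [principalPart, mul_apply, Pi.single_apply]
  · simp only [principalPart, Matrix.smul_apply, fromBlocks_apply₂₁, Matrix.add_apply,
      mul_apply, of_apply, Pi.single_apply, ite_mul, one_mul, zero_mul, Finset.sum_ite_eq',
      Finset.mem_univ, if_true, Fintype.sum_unique, smul_eq_mul]
    field_simp
    ring
  · simp [principalPart, mul_apply, Pi.single_apply, div_mul_eq_mul_div]

end MomentumConstraint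

open MomentumConstraint in
theorem symmetrizer_symmetrizes_coefficients
    (n : ℕ)
    (G : Matrix (Fin (n - 1)) (Fin (n - 1)) ℝ) (hG : G.PosDef)
    (v : Fin (n - 1) → ℝ)
    (κ τ : ℝ) (hκ : κ ≠ 0) (hτ : τ ≠ 0)
    (N : ℝ) (s : Fin (n - 1) → ℝ)
    (B : Fin (n - 1) → Matrix (Fin (n - 1) ⊕ Unit) (Fin (n - 1) ⊕ Unit) ℝ)
    (hB : ∀ a, B a = (-(s a)) • (1 : Matrix (Fin (n - 1) ⊕ Unit) (Fin (n - 1) ⊕ Unit) ℝ)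
      + Matrix.of (fun i j =>
          match i, j with
          | Sum.inl i, Sum.inl j => if i = a then -2 * (N / τ) * v j else 0
          | Sum.inl i, Sum.inr _ => if i = a then κ * N / τ else 0
          | Sum.inr _, Sum.inl j => -N * G a j
          | Sum.inr _, Sum.inr _ => 0))
    (H : Matrix (Fin (n - 1) ⊕ Unit) (Fin (n - 1) ⊕ Unit) ℝ)
    (hH : H = Matrix.fromBlocks
      (Matrix.of fun i j => (4 * v i * v j - κ * τ * G i j) / κ ^ 2)
      (Matrix.of fun i _ => -(2 / κ) * v i)
      (Matrix.of fun _ j => -(2 / κ) * v j)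
      (Matrix.of fun _ _ => 1)) :
    ∀ a, (H * B a).IsSymm := by
  intro a
  have hH' : H = symmetrizer G v κ τ := hH
  have hB' : B a = (-(s a)) • 1 + principalPart G v κ τ N a := by
    rw [hB a, principalPart]
    congr 1
    ext (i | _) (j | _) <;> rfl
  rw [hB', ← principalPartFactor_mul_symmetrizer hκ hτ, ← hH']
  have hHsymm : H.IsSymm := hH' ▸ symmetrizer_isSymm (isHermitian_iff_isSymm.mp hG.1) v κ τ
  exact hHsymm.mul_smul_one_add_mul (principalPartFactor_isSymm v κ τ N a) _
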